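/- arXiv:0907.0602 — 3 statements merged into one kernel-verified Lean document; each statement's English description precedes it below -/
import Mathlib

section
/- Let X be a topological space, 𝓕 a family of subsets of X, and λ a regular infinite cardinal. If X is 𝓕-D-compact for some ultrafilter D uniform over λ, then X is 𝓕-[λ,λ]-compact. -/
open Cardinal Set Topology

universe u v w

/-- `x` is a `D`-limit point of the family `Y`. -/
def IsDLimit {X : Type u} [TopologicalSpace X] {Z : Type v} (D : Ultrafilter Z)
    (Y : Z → Set X) (x : X) : Prop :=
  ∀ U ∈ nhds x, {z : Z | (Y z ∩ U).Nonempty} ∈ D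

/-- `X` is `𝓕`-`D`-compact: every `Z`-indexed family of members of `𝓕` has a `D`-limit point. -/
def FDCompact {X : Type u} [TopologicalSpace X] {Z : Type v} (F : Set (Set X))
    (D : Ultrafilter Z) : Prop :=
  ∀ Y : Z → Set X, (∀ z, Y z ∈ F) → ∃ x : X, IsDLimit D Y x

/-- `X` is `𝓕`-[μ,λ]-compact. -/
def FMuLamCompact {X : Type u} [TopologicalSpace X] (F : Set (Set X))
    (mu lam : Cardinal.{u}) : Prop :=
  ∀ C : lam.ord.ToType → Set X, (∀ α, IsClosed (C α)) →
    (∀ Z : Set lam.ord.ToType, #Z < mu → ∃ f ∈ F, f ⊆ ⋂ α ∈ Z, C α) →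
    (⋂ α, C α).Nonempty

/-! Pick `Y z ∈ 𝓕` inside `⋂ α < z, C α` and let `x` be a `D`-limit point of `Y`. For each `α`,
uniformity of `D` puts the final segment `Ioi α` in `D`, and there `Y z ⊆ C α`; so every
neighbourhood of `x` meets the closed set `C α`, i.e. `x ∈ C α`. -/

theorem Cardinal.mk_Iic_ord_toType_lt {c : Cardinal} (hc : ℵ₀ ≤ c) (i : c.ord.ToType) :
    #(Iic i) < c := by
  have hIio : #(Iio i) < c := by simpa using mk_Iio_lt i (by simp)
  calc #(Iic i) = #(insert i (Iio i) : Set _) := by rw [Iio_insert]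
    _ ≤ #(Iio i) + 1 := mk_insert_le
    _ < c := add_lt_of_lt hc hIio (one_lt_aleph0.trans_le hc)

theorem Ultrafilter.Ioi_mem_of_forall_mk_eq {c : Cardinal} (hc : ℵ₀ ≤ c)
    {D : Ultrafilter c.ord.ToType} (hD : ∀ A ∈ D, #A = c) (i : c.ord.ToType) : Ioi i ∈ D := by
  rw [← compl_Iic, Ultrafilter.compl_mem_iff_notMem]
  exact fun hi => (mk_Iic_ord_toType_lt hc i).ne (hD _ hi)

theorem IsDLimit.mem_of_eventually_subset {X : Type*} [TopologicalSpace X] {Z : Type*}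
    {D : Ultrafilter Z} {Y : Z → Set X} {x : X} (hx : IsDLimit D Y x) {C : Set X}
    (hC : IsClosed C) (hY : ∀ᶠ z in (D : Filter Z), Y z ⊆ C) : x ∈ C := by
  by_contra hxC
  have hmeets : ∀ᶠ z in (D : Filter Z), (Y z ∩ Cᶜ).Nonempty :=
    hx _ (hC.isOpen_compl.mem_nhds hxC)
  obtain ⟨z, ⟨y, hyY, hyC⟩, hYC⟩ := (hmeets.and hY).exists
  exact hyC (hYC hyY)

theorem stmt8 {X : Type u} [TopologicalSpace X] (F : Set (Set X)) (lam : Cardinal.{u})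
    (hlam : lam.IsRegular) (D : Ultrafilter lam.ord.ToType)
    (hD : ∀ A ∈ D, #A = lam) (h : FDCompact F D) :
    FMuLamCompact F lam lam := by
  intro C hC hfin
  choose Y hYF hYC using fun z : lam.ord.ToType =>
    hfin (Iio z) (by simpa using mk_Iio_lt z (by simp))
  obtain ⟨x, hx⟩ := h Y hYF
  refine ⟨x, mem_iInter.2 fun α => hx.mem_of_eventually_subset (hC α) ?_⟩
  filter_upwards [Ultrafilter.Ioi_mem_of_forall_mk_eq hlam.aleph0_le hD α] with z hαz
  exact (hYC z).trans (biInter_subset_of_mem hαz)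
end

section
/- Let X be a topological space, λ an infinite cardinal, κ the weight of X (the least cardinality of a base for the topology of X), and δ = min{2^{2^λ}, κ^λ} (cardinal exponentiation). Let X^δ denote the δ-th power of X with the product (Tychonoff) topology, and let 𝓕^δ be the family of all subsets of X^δ of the form ∏_{β<δ} O_β with each O_β a nonempty open subset of X. Then there exists an ultrafilter D uniform over λ such that X is D-pseudocompact if and only if every λ-indexed sequence of members of 𝓕^δ has a λ-complete accumulation point in X^δ. -/
/-!
Forward: if `D` is uniform and `X` is `D`-pseudocompact, take a `D`-limit point in every
coordinate; their tuple is a `D`-limit point of the box family, and uniformity of `D` makes it a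
`λ`-complete accumulation point.

Backward: suppose `X` is `D`-pseudocompact for no uniform `D`, and choose for each uniform `D` a
counterexample family of basic open sets. There are at most `2 ^ 2 ^ λ` uniform ultrafilters and
at most `κ ^ λ` sequences of basic sets, so at most `δ` distinct counterexamples, which can be laid
out as the `δ` coordinates of one box family. Let `x` be a `λ`-complete accumulation point of it.
The sets `{α | Y α meets U}`, `U ∈ 𝓝 x`, together with the complements of small sets, have the
finite intersection property, so some uniform `D` contains them all; then each coordinate of `x`
is a `D`-limit point of its factor family, in particular of the counterexample chosen for `D`.
-/

open Cardinal Set Topology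

universe u

/-- `x` is a `lam`-complete accumulation point of the sequence `Y`. -/
def IsCompleteAccPt {X : Type u} [TopologicalSpace X] (lam : Cardinal.{u})
    {ι : Type u} (Y : ι → Set X) (x : X) : Prop :=
  ∀ U ∈ nhds x, #{i : ι | (Y i ∩ U).Nonempty} = lam

/-- The family of all products of `δ` members of `𝓕`, as subsets of the power `X^δ`. -/
def PowFamily {X : Type u} (F : Set (Set X)) (δ : Cardinal.{u}) :
    Set (Set (δ.ord.ToType → X)) :=
  {s | ∃ f : δ.ord.ToType → Set X, (∀ β, f β ∈ F) ∧ s = Set.pi Set.univ f}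

/-- `X` is `D`-pseudocompact: every family of nonempty open subsets of `X`
indexed by the underlying set of `D` has a `D`-limit point in `X`. -/
def DPseudocompact {X : Type u} [TopologicalSpace X] {Z : Type v} (D : Ultrafilter Z) : Prop :=
  FDCompact {s : Set X | s.Nonempty ∧ IsOpen s} D

open Filter TopologicalSpace

variable {X : Type u} [TopologicalSpace X]

section DLimit

variable {Z : Type*} {D : Ultrafilter Z}

lemma IsDLimit.mono {Y Y' : Z → Set X} {x : X} (h : IsDLimit D Y x) (hY : ∀ z, Y z ⊆ Y' z) :
    IsDLimit D Y' x :=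
  fun U hU => mem_of_superset (h U hU) fun z hz => hz.mono (inter_subset_inter_left _ (hY z))

lemma TopologicalSpace.IsTopologicalBasis.exists_not_isDLimit {B : Set (Set X)}
    (hB : IsTopologicalBasis B) (h : ¬ DPseudocompact (X := X) D) :
    ∃ O : Z → B, (∀ z, (O z : Set X).Nonempty) ∧ ∀ x, ¬ IsDLimit D (fun z => (O z : Set X)) x := by
  simp only [DPseudocompact, FDCompact, not_forall, not_exists] at h
  obtain ⟨Y, hY, hno⟩ := h
  have hshrink : ∀ z, ∃ b ∈ B, b.Nonempty ∧ b ⊆ Y z := fun z => by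
    obtain ⟨p, hp⟩ := (hY z).1
    obtain ⟨b, hbB, hpb, hbY⟩ := hB.exists_subset_of_mem_open hp (hY z).2
    exact ⟨b, hbB, ⟨p, hpb⟩, hbY⟩
  choose O hOB hO hOY using hshrink
  exact ⟨fun z => ⟨O z, hOB z⟩, hO, fun x hx => hno x (hx.mono hOY)⟩

lemma isDLimit_univ_pi {Δ : Type u} {π : Δ → Type u} [∀ β, TopologicalSpace (π β)]
    {Y : Z → ∀ β, Set (π β)} (hY : ∀ z β, (Y z β).Nonempty) {x : ∀ β, π β}
    (hx : ∀ β, IsDLimit D (fun z => Y z β) (x β)) :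
    IsDLimit D (fun z => pi univ (Y z)) x := by
  classical
  intro U hU
  rw [nhds_pi, Filter.mem_pi] at hU
  obtain ⟨I, hI, V, hV, hVU⟩ := hU
  filter_upwards [(biInter_mem hI).mpr fun β _ => hx β (V β) (hV β)] with z hz
  have hbox : (pi univ fun β => Y z β ∩ if β ∈ I then V β else univ).Nonempty := by
    refine univ_pi_nonempty_iff.mpr fun β => ?_
    split_ifs with hβ
    · exact mem_iInter₂.mp hz β hβ
    · simpa using hY z β
  rw [pi_inter_distrib, pi_univ_ite] at hbox
  exact hbox.mono (inter_subset_inter_right _ hVU)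

end DLimit

lemma mk_ultrafilter_le (Z : Type*) : #(Ultrafilter Z) ≤ (2 : Cardinal) ^ (2 : Cardinal) ^ #Z := by
  rw [← mk_set, ← mk_set]
  exact mk_le_of_injective fun D D' h => Ultrafilter.coe_injective (Filter.filter_eq h)

lemma exists_ultrafilter_le_forall_mk_eq {Z : Type u} {lam : Cardinal.{u}} (hlam : ℵ₀ ≤ lam)
    (hZ : #Z = lam) {F : Filter Z} (hF : ∀ s ∈ F, lam ≤ #s) :
    ∃ D : Ultrafilter Z, ↑D ≤ F ∧ ∀ s ∈ D, #s = lam := by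
  let cosmall : Filter Z := comk (fun s => #s < lam) (by simpa using aleph0_pos.trans_le hlam)
    (fun t ht s hs => (mk_le_mk_of_subset hs).trans_lt ht)
    (fun s hs t ht => (mk_union_le s t).trans_lt (add_lt_of_lt hlam hs ht))
  have hne : (F ⊓ cosmall).NeBot := by
    refine inf_neBot_iff.mpr fun s hs t (ht : #(tᶜ : Set Z) < lam) => ?_
    by_contra hst
    have hsub : s ⊆ tᶜ := fun z hzs hzt => hst ⟨z, hzs, hzt⟩
    exact (hF s hs).not_gt ((mk_le_mk_of_subset hsub).trans_lt ht)
  refine ⟨.of (F ⊓ cosmall), (Ultrafilter.of_le _).trans inf_le_left, fun s hs => ?_⟩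
  refine le_antisymm (hZ ▸ mk_set_le s) (not_lt.mp fun hlt => ?_)
  have hcompl : sᶜ ∈ Ultrafilter.of (F ⊓ cosmall) :=
    Ultrafilter.of_le _ (mem_inf_of_right (show #(sᶜᶜ : Set Z) < lam by rwa [compl_compl]))
  exact Ultrafilter.compl_notMem_iff.mpr hs hcompl

section AccFilter

variable {ι : Type*}

/-- `x` is a `D`-limit point of `Y` iff `D` refines this filter, and a `λ`-complete accumulation
point iff all its members have cardinality `λ`. -/
def accFilter (Y : ι → Set X) (x : X) : Filter ι :=
  (𝓝 x).lift' fun U => {i | (Y i ∩ U).Nonempty}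

lemma mem_accFilter {Y : ι → Set X} {x : X} {s : Set ι} :
    s ∈ accFilter Y x ↔ ∃ U ∈ 𝓝 x, {i | (Y i ∩ U).Nonempty} ⊆ s :=
  mem_lift'_sets fun _ _ hUV _ hi => hi.mono (inter_subset_inter_right _ hUV)

lemma isDLimit_iff_le_accFilter {D : Ultrafilter ι} {Y : ι → Set X} {x : X} :
    IsDLimit D Y x ↔ ↑D ≤ accFilter Y x :=
  le_lift'.symm

lemma accFilter_le_of_mapsTo {X' : Type*} [TopologicalSpace X'] {f : X → X'} {x : X}
    (hf : ContinuousAt f x) {Y : ι → Set X} {Y' : ι → Set X'} (hY : ∀ i, MapsTo f (Y i) (Y' i)) :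
    accFilter Y x ≤ accFilter Y' (f x) :=
  le_lift'.mpr fun V hV => mem_accFilter.mpr
    ⟨f ⁻¹' V, hf hV, fun i ⟨p, hpY, hpV⟩ => ⟨f p, hY i hpY, hpV⟩⟩

end AccFilter

lemma IsCompleteAccPt.le_mk_of_mem_accFilter {lam : Cardinal.{u}} {ι : Type u} {Y : ι → Set X}
    {x : X} (hx : IsCompleteAccPt lam Y x) {s : Set ι} (hs : s ∈ accFilter Y x) : lam ≤ #s := by
  obtain ⟨U, hU, hUs⟩ := mem_accFilter.mp hs
  exact (hx U hU).ge.trans (mk_le_mk_of_subset hUs)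

lemma IsCompleteAccPt.exists_uniform_isDLimit {lam : Cardinal.{u}} (hlam : ℵ₀ ≤ lam)
    {Λ Δ : Type u} (hΛ : #Λ = lam) {π : Δ → Type u} [∀ β, TopologicalSpace (π β)]
    {O : ∀ β, Λ → Set (π β)} {x : ∀ β, π β}
    (hx : IsCompleteAccPt lam (fun α => pi univ fun β => O β α) x) :
    ∃ D : Ultrafilter Λ, (∀ A ∈ D, #A = lam) ∧ ∀ β, IsDLimit D (O β) (x β) := by
  obtain ⟨D, hDx, hD⟩ :=
    exists_ultrafilter_le_forall_mk_eq hlam hΛ fun s hs => hx.le_mk_of_mem_accFilter hs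
  refine ⟨D, hD, fun β => isDLimit_iff_le_accFilter.mpr (hDx.trans ?_)⟩
  exact accFilter_le_of_mapsTo (continuous_apply β).continuousAt fun α y hy => hy β trivial

lemma DPseudocompact.exists_isCompleteAccPt {lam δ : Cardinal.{u}} {Λ : Type u}
    {D : Ultrafilter Λ} (hP : DPseudocompact (X := X) D) (hD : ∀ A ∈ D, #A = lam)
    {Y : Λ → Set (δ.ord.ToType → X)}
    (hY : ∀ i, Y i ∈ PowFamily {s : Set X | s.Nonempty ∧ IsOpen s} δ) :
    ∃ x, IsCompleteAccPt lam Y x := by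
  choose O hO hYO using hY
  obtain rfl : Y = fun i => pi univ (O i) := funext hYO
  choose x hx using fun β => hP (fun i => O i β) fun i => hO i β
  exact ⟨x, fun U hU => hD _ (isDLimit_univ_pi (fun i β => (hO i β).1) hx U hU)⟩

lemma exists_comp_eq_of_mk_range_le {U V Δ : Type u} [Nonempty U] (c : U → V)
    (h : #(range c) ≤ #Δ) : ∃ g : Δ → U, ∀ D, ∃ β, c (g β) = c D := by
  obtain ⟨e⟩ := h
  have : Nonempty (range c) := ⟨⟨c (Classical.arbitrary U), mem_range_self _⟩⟩
  choose pre hpre using fun r : range c => r.2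
  refine ⟨pre ∘ Function.invFun e, fun D => ?_⟩
  obtain ⟨β, hβ⟩ := Function.invFun_surjective e.injective ⟨c D, D, rfl⟩
  exact ⟨β, by simp [hβ, hpre]⟩

lemma exists_uniform_dPseudocompact_of_forall_isCompleteAccPt {lam : Cardinal.{u}}
    (hlam : ℵ₀ ≤ lam) {Λ Δ : Type u} (hΛ : #Λ = lam) {B : Set (Set X)}
    (hB : IsTopologicalBasis B) (hΔ : min ((2 : Cardinal) ^ (2 : Cardinal) ^ lam) (#B ^ lam) ≤ #Δ)
    (h : ∀ O : Δ → Λ → Set X, (∀ β α, (O β α).Nonempty ∧ IsOpen (O β α)) →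
      ∃ x, IsCompleteAccPt lam (fun α => pi univ fun β => O β α) x) :
    ∃ D : Ultrafilter Λ, (∀ A ∈ D, #A = lam) ∧ DPseudocompact (X := X) D := by
  by_contra! hno
  let Uniform := {D : Ultrafilter Λ // ∀ A ∈ D, #A = lam}
  choose c hc_ne hc using fun D : Uniform => hB.exists_not_isDLimit (hno D.1 D.2)
  obtain ⟨D₀, -, hD₀⟩ := exists_ultrafilter_le_forall_mk_eq (F := ⊤) hlam hΛ (by simp [hΛ])
  have : Nonempty Uniform := ⟨⟨D₀, hD₀⟩⟩
  have hcard_ultra : #(range c) ≤ (2 : Cardinal) ^ (2 : Cardinal) ^ lam :=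
    mk_range_le.trans ((mk_subtype_le _).trans (hΛ ▸ mk_ultrafilter_le Λ))
  have hcard_basis : #(range c) ≤ #B ^ lam := by
    rw [← hΛ, power_def]
    exact mk_set_le _
  obtain ⟨g, hg⟩ := exists_comp_eq_of_mk_range_le c ((le_min hcard_ultra hcard_basis).trans hΔ)
  obtain ⟨x, hx⟩ := h (fun β α => c (g β) α) fun β α => ⟨hc_ne (g β) α, hB.isOpen (c (g β) α).2⟩
  obtain ⟨D, hD, hlim⟩ := hx.exists_uniform_isDLimit hlam hΛ
  obtain ⟨β, hβ⟩ := hg ⟨D, hD⟩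
  exact hc ⟨D, hD⟩ (x β) (hβ ▸ hlim β)

theorem stmt14 {X : Type u} [TopologicalSpace X] (lam : Cardinal.{u})
    (hlam : Cardinal.aleph0 ≤ lam)
    (κ : Cardinal.{u})
    (hκ : κ = sInf {c : Cardinal.{u} |
      ∃ B : Set (Set X), TopologicalSpace.IsTopologicalBasis B ∧ #B = c})
    (δ : Cardinal.{u})
    (hδ : δ = min ((2 : Cardinal.{u}) ^ ((2 : Cardinal.{u}) ^ lam)) (κ ^ lam)) :
    (∃ D : Ultrafilter lam.ord.ToType, (∀ A ∈ D, #A = lam) ∧ DPseudocompact (X := X) D) ↔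
      ∀ Y : lam.ord.ToType → Set (δ.ord.ToType → X),
        (∀ i, Y i ∈ PowFamily {s : Set X | s.Nonempty ∧ IsOpen s} δ) →
        ∃ x : δ.ord.ToType → X, IsCompleteAccPt lam Y x := by
  constructor
  · rintro ⟨D, hD, hP⟩ Y hY
    exact hP.exists_isCompleteAccPt hD hY
  · intro h
    obtain ⟨B, hB, hBκ⟩ : κ ∈ {c | ∃ B : Set (Set X), IsTopologicalBasis B ∧ #B = c} :=
      hκ ▸ csInf_mem ⟨_, _, isTopologicalBasis_opens, rfl⟩
    refine exists_uniform_dPseudocompact_of_forall_isCompleteAccPt hlam (mk_ord_toType lam) hB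
      (Δ := δ.ord.ToType) (by rw [mk_ord_toType, hδ, hBκ]) fun O hO => ?_
    exact h _ fun α => ⟨fun β => O β α, fun β => hO β α, rfl⟩
end

section
/- Let λ be a regular infinite cardinal. Then every ultrafilter uniform over the successor cardinal λ⁺ is λ-decomposable. -/
/-!
Suppose `D` is not `λ`-decomposable. Since `λ` is regular, every `f : λ⁺ → λ` is then bounded by
some `w < λ` on a set in `D`, and uniformity puts every final segment of `λ⁺` in `D`. Fix, for each
`α < λ⁺`, an injection `F(·, α) : α → λ`, and let `g β` bound `F(β, ·)` modulo `D`. By pigeonhole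
there are `λ` many `β`, say `b i` for `i < λ`, with the same bound `w`. For each `α`, the indices
`i` with `b i < α` and `F(b i, α) < w` inject into `w`, so they are fewer than `λ` and bounded by
some `d α < λ`. Bounding `d` by `v` modulo `D` and meeting this with the set of `α` attached to
`i = v` yields an `α` with `v < d α < v`.
-/

open Cardinal Set Topology

universe u v w

/-- `D` is `μ`-decomposable: some function to (the canonical set of size) `μ`
pushes `D` forward to a uniform ultrafilter over `μ`. -/
def Decomposable {Z : Type v} (D : Ultrafilter Z) (mu : Cardinal.{w}) : Prop :=
  ∃ f : Z → mu.ord.ToType, ∀ A ∈ Ultrafilter.map f D, #A = mu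

theorem mk_Iio_lt_of_ord_toType {c : Cardinal.{u}} (i : c.ord.ToType) : #(Iio i) < c := by
  simpa using mk_Iio_lt i (by simp)

theorem exists_forall_lt_of_mk_lt_cof {α : Type*} [LinearOrder α] {s : Set α}
    (hs : #s < Order.cof α) : ∃ a, ∀ b ∈ s, b < a := by
  by_contra! h
  exact (Order.cof_le h).not_gt hs

theorem exists_injOn_Iio {α β : Type u} [Preorder α] [Nonempty β]
    (h : ∀ a : α, #(Iio a) ≤ #β) : ∃ F : α → α → β, ∀ a, InjOn (F · a) (Iio a) := by
  classical
  have e : ∀ a, Iio a ↪ β := fun a => ((Cardinal.le_def _ _).1 (h a)).some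
  refine ⟨fun b a => if hb : b < a then e a ⟨b, hb⟩ else Classical.arbitrary β, ?_⟩
  intro a b hb b' hb' heq
  simp only [dif_pos (show b < a from hb), dif_pos (show b' < a from hb')] at heq
  exact congrArg Subtype.val ((e a).injective heq)

theorem exists_injective_forall_eq_of_mk_lt {α β : Type u} (hβ : (#β).IsRegular)
    (hαβ : #α < #β) (g : β → α) : ∃ a, ∃ b : α → β, Function.Injective b ∧ ∀ i, g (b i) = a := by
  obtain ⟨a, ha⟩ := infinite_pigeonhole_card g #β le_rfl hβ.aleph0_le (by rwa [hβ.cof_ord])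
  obtain ⟨e⟩ := (Cardinal.le_def _ _).1 (hαβ.le.trans ha)
  exact ⟨a, fun i => e i, Subtype.val_injective.comp e.injective, fun i => (e i).2⟩

section Successor

variable {lam : Cardinal.{u}}

theorem Ultrafilter.exists_eventually_lt_of_not_decomposable {Z : Type v} {D : Ultrafilter Z}
    (hlam : lam.IsRegular) (hD : ¬ Decomposable D lam) (f : Z → lam.ord.ToType) :
    ∃ w, ∀ᶠ z in D, f z < w := by
  simp only [Decomposable, not_exists, not_forall] at hD
  obtain ⟨A, hA, hAne⟩ := hD f
  have hAlt : #A < lam := ((mk_set_le A).trans_eq (mk_ord_toType lam)).lt_of_ne hAne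
  obtain ⟨w, hw⟩ := exists_forall_lt_of_mk_lt_cof (s := A)
    (by rwa [Ordinal.cof_toType, hlam.cof_ord])
  exact ⟨w, Filter.mem_of_superset hA fun z hz => hw _ hz⟩

theorem Ultrafilter.Ioi_mem_of_forall_mk_eq_s17 (hlam : ℵ₀ ≤ lam)
    {D : Ultrafilter (Order.succ lam).ord.ToType} (hD : ∀ A ∈ D, #A = Order.succ lam)
    (a : (Order.succ lam).ord.ToType) : Ioi a ∈ D := by
  have hIic : #(Iic a) ≤ lam := calc
    #(Iic a) ≤ #(Iio a) + 1 := by rw [← Iio_insert]; exact mk_insert_le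
    _ ≤ lam + 1 := by
      gcongr; exact Order.lt_succ_iff.1 (mk_Iio_lt_of_ord_toType a)
    _ = lam := add_one_of_aleph0_le hlam
  have hnot : Iic a ∉ D := fun h => (Order.lt_succ lam).not_ge (hD _ h ▸ hIic)
  rw [← compl_Iic]
  exact D.compl_mem_iff_notMem.2 hnot

theorem not_forall_exists_eventually_lt (hlam : lam.IsRegular)
    (D : Ultrafilter (Order.succ lam).ord.ToType) (htail : ∀ a, Ioi a ∈ D) :
    ¬ ∀ f : (Order.succ lam).ord.ToType → lam.ord.ToType, ∃ w, ∀ᶠ z in D, f z < w := by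
  intro hbdd
  have : Nonempty lam.ord.ToType := by
    rw [← mk_ne_zero_iff, mk_ord_toType]; exact hlam.pos.ne'
  obtain ⟨F, hF⟩ := exists_injOn_Iio (β := lam.ord.ToType) fun a => by
    simpa using Order.lt_succ_iff.1 (mk_Iio_lt_of_ord_toType a)
  choose g hg using fun β => hbdd (F β)
  obtain ⟨w, b, hb, hgb⟩ := exists_injective_forall_eq_of_mk_lt
    (by simpa using isRegular_succ hlam.aleph0_le) (by simp) g
  have hX : ∀ i, ∀ᶠ α in D, b i < α ∧ F (b i) α < w := fun i =>
    Filter.Eventually.and (htail (b i)) (hgb i ▸ hg (b i))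
  have hsmall : ∀ α, #{i | b i < α ∧ F (b i) α < w} < lam := by
    intro α
    have hinj : InjOn (fun i => F (b i) α) {i | b i < α ∧ F (b i) α < w} :=
      fun i hi j hj h => hb (hF α hi.1 hj.1 h)
    calc #{i | b i < α ∧ F (b i) α < w}
        = #((fun i => F (b i) α) '' {i | b i < α ∧ F (b i) α < w}) :=
          (mk_image_eq_of_injOn _ _ hinj).symm
      _ ≤ #(Iio w) := mk_le_mk_of_subset (image_subset_iff.2 fun i hi => hi.2)
      _ < lam := mk_Iio_lt_of_ord_toType w
  choose d hd using fun α => exists_forall_lt_of_mk_lt_cof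
    (by rw [Ordinal.cof_toType, hlam.cof_ord]; exact hsmall α)
  obtain ⟨v, hv⟩ := hbdd d
  obtain ⟨α, hα, hdα⟩ := ((hX v).and hv).exists
  exact (hd α v hα).not_gt hdα

end Successor

theorem stmt17 (lam : Cardinal.{u}) (hlam : lam.IsRegular)
    (D : Ultrafilter (Order.succ lam).ord.ToType)
    (hD : ∀ A ∈ D, #A = Order.succ lam) :
    Decomposable D lam := by
  by_contra hdec
  exact not_forall_exists_eventually_lt hlam D (D.Ioi_mem_of_forall_mk_eq_s17 hlam.aleph0_le hD)
    (D.exists_eventually_lt_of_not_decomposable hlam hdec)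
end
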